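/- For the n-dimensional hypercube Q_n and any integer m with n+2 ≤ m ≤ 2n−1, the minimum m-vertex boundary number satisfies b_v(m; Q_n) = −m²/2 + (2n − 3/2)m − n² + 2. -/

import Mathlib

/-- The `n`-dimensional hypercube: vertices are binary strings of length `n`,
adjacent iff they differ in exactly one coordinate. -/
def Qube (n : ℕ) : SimpleGraph (Fin n → Bool) where
  Adj u v := hammingDist u v = 1
  symm := ⟨fun u v h => by show hammingDist v u = 1; rwa [hammingDist_comm]⟩
  loopless := ⟨fun u h => by simp only [hammingDist_self] at h; exact absurd h (by norm_num)⟩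

instance (n : ℕ) : DecidableRel (Qube n).Adj :=
  fun u v => inferInstanceAs (Decidable (hammingDist u v = 1))

/-- The vertex boundary of a vertex set `H` in `Qube n`. -/
def vBoundary (n : ℕ) (H : Finset (Fin n → Bool)) : Finset (Fin n → Bool) :=
  Finset.univ.filter (fun v => v ∉ H ∧ ∃ u ∈ H, (Qube n).Adj u v)

/-- The minimum `m`-vertex boundary number of `Qube n`. -/
noncomputable def bv (n m : ℕ) : ℕ :=
  sInf { k | ∃ H : Finset (Fin n → Bool), H.card = m ∧ (vBoundary n H).card = k }

/-- The hypercube with a vertex set `S` deleted. -/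
def QDel (n : ℕ) (S : Finset (Fin n → Bool)) :
    SimpleGraph ((↑(Sᶜ) : Set (Fin n → Bool))) :=
  (Qube n).induce (↑(Sᶜ) : Set (Fin n → Bool))

/-- The `k`-extra connectivity of `Qube n`: the minimum size of a vertex set `T`
such that `Qube n − T` is disconnected and every component has at least `k+1` vertices. -/
noncomputable def extraConn (n k : ℕ) : ℕ :=
  sInf { t | ∃ T : Finset (Fin n → Bool), T.card = t ∧
    ¬ (QDel n T).Connected ∧
    ∀ c : (QDel n T).ConnectedComponent,
      k + 1 ≤ {v | (QDel n T).connectedComponentMk v = c}.ncard }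

/-!
Split `H ⊆ Q_{n+1}` along the first coordinate into slices `A, B ⊆ Q_n`. The boundary of `H`
splits accordingly into `∂A ∪ (B \ A)` and `∂B ∪ (A \ B)`, so `|∂H| ≥ |∂A| + |∂B|` and
`|∂H| ≥ |∂A| + |A| - |B|`. Induction on `n`, with a case analysis on the sizes of the slices
(a slice too large for the induction hypothesis is trimmed to `2n + 1` vertices, which costs at
most one boundary vertex per removed vertex), gives `2|∂H| ≥ bvBound n |H|` for
`1 ≤ |H| ≤ 2n + 1`.

The bound is attained by the closed unit ball around a vertex `z₀` together with `m - n - 1`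
neighbours of a neighbour `z₁` of `z₀`. These sets are built dimension by dimension: a copy of
such a set in `Q_n`, with the vertex above `z₀` (or the vertices above `z₀` and `z₁`) added, is
again such a set in `Q_{n+1}`.
-/

namespace Hypercube

open Finset

variable {n : ℕ}

lemma mem_vBoundary {H : Finset (Fin n → Bool)} {v : Fin n → Bool} :
    v ∈ vBoundary n H ↔ v ∉ H ∧ ∃ u ∈ H, hammingDist u v = 1 := by
  rw [vBoundary, mem_filter]
  simp [Qube]

def slice (b : Bool) (H : Finset (Fin (n + 1) → Bool)) : Finset (Fin n → Bool) :=
  univ.filter fun u => Fin.cons b u ∈ H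

@[simp]
lemma mem_slice {b : Bool} {H : Finset (Fin (n + 1) → Bool)} {u : Fin n → Bool} :
    u ∈ slice b H ↔ Fin.cons b u ∈ H := by
  simp [slice]

lemma card_slice (b : Bool) (H : Finset (Fin (n + 1) → Bool)) :
    (slice b H).card = (H.filter (· 0 = b)).card := by
  rw [← card_map ⟨_, Fin.cons_right_injective (α := fun _ => Bool) b⟩]
  congr 1
  ext v
  induction v using Fin.consCases
  simp +contextual [eq_comm]

lemma card_slice_add_card_slice_not (b : Bool) (H : Finset (Fin (n + 1) → Bool)) :
    (slice b H).card + (slice (!b) H).card = H.card := by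
  rw [card_slice, card_slice, ← card_filter_add_card_filter_not (s := H) (· 0 = b)]
  congr 2
  ext v; cases b <;> simp

lemma hammingDist_cons (a b : Bool) (u w : Fin n → Bool) :
    hammingDist (Fin.cons a u : Fin (n + 1) → Bool) (Fin.cons b w) =
      (if a = b then 0 else 1) + hammingDist u w := by
  simp only [hammingDist, card_filter, Fin.sum_univ_succ, Fin.cons_zero, Fin.cons_succ]
  by_cases h : a = b <;> simp [h]

lemma slice_vBoundary (b : Bool) (H : Finset (Fin (n + 1) → Bool)) :
    slice b (vBoundary (n + 1) H) =
      vBoundary n (slice b H) ∪ (slice (!b) H \ slice b H) := by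
  ext u
  simp only [mem_slice, mem_vBoundary, mem_union, mem_sdiff, Fin.exists_fin_succ_pi,
    hammingDist_cons]
  cases b <;> simp [Bool.exists_bool] <;> grind

lemma card_vBoundary_succ (b : Bool) (H : Finset (Fin (n + 1) → Bool)) :
    (vBoundary (n + 1) H).card =
      (vBoundary n (slice b H) ∪ (slice (!b) H \ slice b H)).card +
        (vBoundary n (slice (!b) H) ∪ (slice b H \ slice (!b) H)).card := by
  rw [← card_slice_add_card_slice_not b, slice_vBoundary, slice_vBoundary, Bool.not_not]

@[simp]
lemma vBoundary_empty : vBoundary n ∅ = ∅ := by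
  ext v; simp [mem_vBoundary]

@[simp]
lemma slice_empty (b : Bool) : slice b (∅ : Finset (Fin (n + 1) → Bool)) = ∅ := by
  ext u; simp

lemma slice_insert_cons (b c : Bool) (u : Fin n → Bool) (S : Finset (Fin (n + 1) → Bool)) :
    slice b (insert (Fin.cons c u) S) = if b = c then insert u (slice b S) else slice b S := by
  ext w; split_ifs with h <;> simp [Fin.cons_inj, h, eq_comm]

lemma card_vBoundary_singleton : ∀ {n : ℕ} (z : Fin n → Bool), (vBoundary n {z}).card = n
  | 0, z => by
    rw [card_eq_zero, eq_empty_iff_forall_notMem]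
    intro v hv
    exact (mem_vBoundary.1 hv).1 (by simp [Subsingleton.elim v z])
  | n + 1, z => by
    induction z using Fin.consCases with
    | cons a u =>
      rw [card_vBoundary_succ a, ← insert_empty, slice_insert_cons, slice_insert_cons]
      simp [card_vBoundary_singleton u]

lemma card_vBoundary_pair : ∀ {n : ℕ} {z₀ z₁ : Fin n → Bool}, hammingDist z₀ z₁ = 1 →
    (vBoundary n {z₀, z₁}).card + 2 = 2 * n
  | 0, z₀, z₁, h => by simp [Subsingleton.elim z₀ z₁] at h
  | n + 1, z₀, z₁, h => by
    induction z₀ using Fin.consCases with | cons a u₀ =>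
    induction z₁ using Fin.consCases with | cons b u₁ =>
    rw [hammingDist_cons] at h
    rw [card_vBoundary_succ a, ← insert_empty, slice_insert_cons, slice_insert_cons,
      slice_insert_cons, slice_insert_cons]
    by_cases hab : a = b
    · subst hab
      have hne : u₀ ≠ u₁ := by rintro rfl; simp at h
      have := card_vBoundary_pair (by simpa using h)
      simp [card_pair hne]
      omega
    · obtain rfl : u₀ = u₁ := by simpa [hab] using h
      obtain rfl : b = !a := by cases a <;> cases b <;> simp_all
      simp [card_vBoundary_singleton]
      omega

/-- Twice the lower bound for the vertex boundary of an `s`-set in `Q_n`, valid for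
`1 ≤ s ≤ 2n + 1`; the two quadratics agree at `s = n + 1`. -/
def bvBound (n s : ℕ) : ℤ :=
  if s ≤ n + 1 then -(s : ℤ) ^ 2 + (2 * n - 1) * s + 2
  else -(s : ℤ) ^ 2 + (4 * n - 3) * s - 2 * n ^ 2 + 4

lemma bvBound_of_le {n s : ℕ} (h : s ≤ n + 1) :
    bvBound n s = -(s : ℤ) ^ 2 + (2 * n - 1) * s + 2 :=
  if_pos h

lemma bvBound_of_ge {n s : ℕ} (h : n + 1 ≤ s) :
    bvBound n s = -(s : ℤ) ^ 2 + (4 * n - 3) * s - 2 * n ^ 2 + 4 := by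
  unfold bvBound
  split_ifs with hs
  · obtain rfl : s = n + 1 := le_antisymm hs h
    push_cast; ring
  · rfl

lemma bvBound_succ_add_le {d a b : ℕ} (hb : 1 ≤ b) (hba : b ≤ a)
    (hs : a + b ≤ 2 * d + 3) (hab : 2 ≤ b ∨ a + b ≤ d + 2) :
    bvBound (d + 1) (a + b) ≤ bvBound d a + bvBound d b := by
  have hbd : b ≤ d + 1 := by omega
  rw [bvBound_of_le hbd]
  rcases le_or_gt (a + b) (d + 2) with hs' | hs'
  · rw [bvBound_of_le hs', bvBound_of_le (by omega)]
    push_cast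
    nlinarith [mul_nonneg (by omega : (0:ℤ) ≤ a - 1) (by omega : (0:ℤ) ≤ b - 1)]
  rw [bvBound_of_ge (by omega : d + 1 + 1 ≤ a + b)]
  rcases le_or_gt a (d + 1) with had | had
  · rw [bvBound_of_le had]
    push_cast
    nlinarith [mul_nonneg (by omega : (0:ℤ) ≤ d + 1 - a) (by omega : (0:ℤ) ≤ d + 1 - b)]
  · rw [bvBound_of_ge had.le]
    push_cast
    nlinarith [mul_nonneg (by omega : (0:ℤ) ≤ a - d - 1) (by omega : (0:ℤ) ≤ b - 2)]

lemma bvBound_succ_add_le_of_le_one {d a b : ℕ} (hb : b ≤ 1) (ha : a ≤ 2 * d + 1)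
    (hab : b = 0 ∨ d + 2 ≤ a) : bvBound (d + 1) (a + b) ≤ bvBound d a + 2 * (a - b) := by
  rcases le_or_gt a (d + 1) with had | had
  · obtain rfl : b = 0 := by omega
    rw [bvBound_of_le had, add_zero, bvBound_of_le (by omega)]
    push_cast; nlinarith
  · rw [bvBound_of_ge had.le, bvBound_of_ge (by omega)]
    interval_cases b <;> push_cast <;> nlinarith

lemma bvBound_succ_add_le_of_two_mul_add_two_le {d a b : ℕ} (hb : b ≤ 1) (ha : 2 * d + 2 ≤ a)
    (hab : a + b ≤ 2 * d + 3) :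
    bvBound (d + 1) (a + b) ≤ bvBound d (2 * d + 1) + 2 * (2 * d + 1) - 2 * b := by
  rw [bvBound_of_ge (by omega), bvBound_of_ge (by omega)]
  have : (a : ℤ) + b ≤ 2 * d + 3 := by exact_mod_cast hab
  interval_cases b <;> push_cast <;> nlinarith

lemma card_vBoundary_slice_add_le (b : Bool) (H : Finset (Fin (n + 1) → Bool)) :
    (vBoundary n (slice b H)).card + (vBoundary n (slice (!b) H)).card ≤
      (vBoundary (n + 1) H).card := by
  rw [card_vBoundary_succ b]
  exact add_le_add (card_le_card subset_union_left) (card_le_card subset_union_left)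

lemma card_vBoundary_slice_add_card_sub_le (b : Bool) (H : Finset (Fin (n + 1) → Bool)) :
    (vBoundary n (slice b H)).card + ((slice b H).card - (slice (!b) H).card) ≤
      (vBoundary (n + 1) H).card := by
  rw [card_vBoundary_succ b]
  exact add_le_add (card_le_card subset_union_left)
    ((le_card_sdiff _ _).trans (card_le_card subset_union_right))

lemma exists_subset_card_vBoundary_le {A : Finset (Fin n → Bool)} {k : ℕ} (hk : k ≤ A.card) :
    ∃ A' ⊆ A, A'.card = k ∧ (vBoundary n A').card + k ≤ (vBoundary n A).card + A.card := by
  obtain ⟨A', hA', rfl⟩ := exists_subset_card_eq hk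
  refine ⟨A', hA', rfl, ?_⟩
  have hsub : vBoundary n A' ⊆ vBoundary n A ∪ (A \ A') := by
    intro v hv
    obtain ⟨hvA', u, hu, huv⟩ := mem_vBoundary.1 hv
    by_cases hvA : v ∈ A
    · exact mem_union_right _ (mem_sdiff.2 ⟨hvA, hvA'⟩)
    · exact mem_union_left _ (mem_vBoundary.2 ⟨hvA, u, hA' hu, huv⟩)
  have := (card_le_card hsub).trans (card_union_le _ _)
  have := card_sdiff_add_card_eq_card hA'
  omega

lemma bvBound_le_two_mul_card_vBoundary_succ
    (ih : ∀ A : Finset (Fin n → Bool), 1 ≤ A.card → A.card ≤ 2 * n + 1 →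
      bvBound n A.card ≤ 2 * (vBoundary n A).card)
    {H : Finset (Fin (n + 1) → Bool)} (h₁ : 1 ≤ H.card) (h₂ : H.card ≤ 2 * n + 3) :
    bvBound (n + 1) H.card ≤ 2 * (vBoundary (n + 1) H).card := by
  obtain ⟨b, hBA⟩ : ∃ b, (slice (!b) H).card ≤ (slice b H).card := by
    rcases le_total (slice true H).card (slice false H).card with h | h
    exacts [⟨false, h⟩, ⟨true, h⟩]
  have hsplit := card_vBoundary_slice_add_le b H
  have hthin := card_vBoundary_slice_add_card_sub_le b H
  rw [← card_slice_add_card_slice_not b H] at h₁ h₂ ⊢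
  set A := slice b H
  set B := slice (!b) H
  by_cases hcase : 2 ≤ B.card ∨ 1 ≤ B.card ∧ A.card + B.card ≤ n + 2
  · have := bvBound_succ_add_le (d := n) (by omega) hBA h₂ (by omega)
    have := ih A (by omega) (by omega)
    have := ih B (by omega) (by omega)
    omega
  by_cases hA : A.card ≤ 2 * n + 1
  · have := bvBound_succ_add_le_of_le_one (d := n) (b := B.card) (by omega) hA (by omega)
    have := ih A (by omega) hA
    omega
  · obtain ⟨A', -, hA'card, hA'⟩ :=
      exists_subset_card_vBoundary_le (k := 2 * n + 1) (not_le.1 hA).le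
    have := bvBound_succ_add_le_of_two_mul_add_two_le (d := n) (b := B.card) (by omega)
      (by omega) h₂
    have := ih A' (by omega) hA'card.le
    rw [hA'card] at this
    omega

lemma bvBound_le_two_mul_card_vBoundary : ∀ {n : ℕ} (H : Finset (Fin n → Bool)),
    1 ≤ H.card → H.card ≤ 2 * n + 1 → bvBound n H.card ≤ 2 * (vBoundary n H).card
  | 0, H, h₁, h₂ => by
    rw [show H.card = 1 by omega]
    simp [bvBound]
  | n + 1, H, h₁, h₂ =>
    bvBound_le_two_mul_card_vBoundary_succ (fun A => bvBound_le_two_mul_card_vBoundary A) h₁ h₂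

def glue (A B : Finset (Fin n → Bool)) : Finset (Fin (n + 1) → Bool) :=
  univ.filter fun v => Fin.tail v ∈ cond (v 0) B A

@[simp]
lemma cons_mem_glue {A B : Finset (Fin n → Bool)} {b : Bool} {u : Fin n → Bool} :
    (Fin.cons b u : Fin (n + 1) → Bool) ∈ glue A B ↔ u ∈ cond b B A := by
  simp [glue]

lemma slice_glue (b : Bool) (A B : Finset (Fin n → Bool)) : slice b (glue A B) = cond b B A := by
  ext u; simp

lemma card_glue (A B : Finset (Fin n → Bool)) : (glue A B).card = A.card + B.card := by
  rw [← card_slice_add_card_slice_not false, slice_glue, slice_glue]; rfl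

lemma card_vBoundary_glue {H T : Finset (Fin n → Bool)} (hT : T ⊆ H) :
    (vBoundary (n + 1) (glue H T)).card =
      (vBoundary n H).card + (vBoundary n T ∪ (H \ T)).card := by
  rw [card_vBoundary_succ false, slice_glue, slice_glue]
  simp [sdiff_eq_empty_iff_subset.2 hT]

@[simp]
lemma vBoundary_univ : vBoundary n univ = ∅ := by
  ext v; simp [mem_vBoundary]

/-- The extremal sets: the closed unit ball around `z₀` and some neighbours of `z₁`. -/
structure IsBallExtension (z₀ z₁ : Fin n → Bool) (H : Finset (Fin n → Bool)) : Prop where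
  dist_eq_one : hammingDist z₀ z₁ = 1
  mem_of_dist_le_one : ∀ w, hammingDist z₀ w ≤ 1 → w ∈ H
  dist_le_one_or_dist_eq_one : ∀ w ∈ H, hammingDist z₀ w ≤ 1 ∨ hammingDist z₁ w = 1

namespace IsBallExtension

variable {z₀ z₁ : Fin n → Bool} {H : Finset (Fin n → Bool)}

lemma glue (h : IsBallExtension z₀ z₁ H) {T : Finset (Fin n → Bool)} (hz₀ : z₀ ∈ T)
    (hT : T ⊆ {z₀, z₁}) :
    IsBallExtension (Fin.cons false z₀) (Fin.cons false z₁) (glue H T) where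
  dist_eq_one := by simpa [hammingDist_cons] using h.dist_eq_one
  mem_of_dist_le_one w hw := by
    induction w using Fin.consCases with | cons c u =>
    rw [hammingDist_cons] at hw
    cases c
    · exact cons_mem_glue.2 (h.mem_of_dist_le_one u (by simpa using hw))
    · obtain rfl : z₀ = u := hammingDist_eq_zero.1 (by simpa using hw)
      exact cons_mem_glue.2 hz₀
  dist_le_one_or_dist_eq_one w hw := by
    induction w using Fin.consCases with | cons c u =>
    simp only [hammingDist_cons]
    cases c
    · simpa using h.dist_le_one_or_dist_eq_one u (cons_mem_glue.1 hw)
    · have := hT (cons_mem_glue.1 hw)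
      rw [mem_insert, mem_singleton] at this
      rcases this with rfl | rfl <;> simp

lemma ne (h : IsBallExtension z₀ z₁ H) : z₀ ≠ z₁ :=
  hammingDist_ne_zero.1 (by simp [h.dist_eq_one])

lemma card_vBoundary_glue_singleton (h : IsBallExtension z₀ z₁ H) :
    (vBoundary (n + 1) (Hypercube.glue H {z₀})).card + 1 =
      (vBoundary n H).card + H.card := by
  have hz₀ : z₀ ∈ H := h.mem_of_dist_le_one z₀ (by simp)
  have hsub : vBoundary n {z₀} ⊆ H \ {z₀} := by
    intro v hv
    obtain ⟨hv, u, hu, huv⟩ := mem_vBoundary.1 hv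
    rw [mem_singleton] at hu
    subst hu
    exact mem_sdiff.2 ⟨h.mem_of_dist_le_one v huv.le, hv⟩
  rw [card_vBoundary_glue (singleton_subset_iff.2 hz₀), union_eq_right.2 hsub,
    card_sdiff_of_subset (singleton_subset_iff.2 hz₀), card_singleton]
  have := card_pos.2 ⟨z₀, hz₀⟩
  omega

lemma card_vBoundary_glue_pair (h : IsBallExtension z₀ z₁ H) :
    (vBoundary (n + 1) (Hypercube.glue H {z₀, z₁})).card + 2 =
      (vBoundary n H).card + 2 * n := by
  have hsub : {z₀, z₁} ⊆ H := by
    simp [insert_subset_iff, h.mem_of_dist_le_one z₀ (by simp),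
      h.mem_of_dist_le_one z₁ h.dist_eq_one.le]
  have hsub' : H \ {z₀, z₁} ⊆ vBoundary n {z₀, z₁} := by
    intro w hw
    obtain ⟨hwH, hwT⟩ := mem_sdiff.1 hw
    refine mem_vBoundary.2 ⟨hwT, ?_⟩
    rcases h.dist_le_one_or_dist_eq_one w hwH with hw₀ | hw₁
    · refine ⟨z₀, by simp, le_antisymm hw₀ (Nat.one_le_iff_ne_zero.2 ?_)⟩
      rw [hammingDist_ne_zero]; rintro rfl; simp at hwT
    · exact ⟨z₁, by simp, hw₁⟩
  rw [card_vBoundary_glue hsub, union_eq_left.2 hsub']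
  have := card_vBoundary_pair h.dist_eq_one
  omega

end IsBallExtension

lemma exists_isBallExtension (hn : 1 ≤ n) : ∀ {m : ℕ}, n + 1 ≤ m → m ≤ 2 * n →
    ∃ z₀ z₁ : Fin n → Bool, ∃ H, IsBallExtension z₀ z₁ H ∧ H.card = m ∧
      2 * ((vBoundary n H).card : ℤ) = -(m : ℤ) ^ 2 + (4 * n - 3) * m - 2 * n ^ 2 + 4 := by
  induction n, hn using Nat.le_induction with
  | base =>
    intro m h₁ h₂
    obtain rfl : m = 2 := by omega
    exact ⟨fun _ => false, fun _ => true, univ, ⟨by decide, by decide, by decide⟩, rfl, by simp⟩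
  | succ n hn ih =>
    intro m h₁ h₂
    rcases Nat.lt_or_ge m (n + 3) with hm | hm
    · obtain rfl : m = n + 2 := by omega
      obtain ⟨z₀, z₁, H, h, hcard, hbd⟩ := ih (m := n + 1) le_rfl (by omega)
      refine ⟨_, _, _, h.glue (T := {z₀}) (mem_singleton_self z₀) (by simp), ?_, ?_⟩
      · rw [card_glue, hcard, card_singleton]
      · have := h.card_vBoundary_glue_singleton
        rw [hcard] at this
        push_cast at hbd ⊢
        linarith
    · obtain ⟨k, rfl⟩ : ∃ k, m = k + 2 := ⟨m - 2, by omega⟩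
      obtain ⟨z₀, z₁, H, h, hcard, hbd⟩ := ih (m := k) (by omega) (by omega)
      refine ⟨_, _, _, h.glue (T := {z₀, z₁}) (by simp) subset_rfl, ?_, ?_⟩
      · rw [card_glue, hcard, card_pair h.ne]
      · have := h.card_vBoundary_glue_pair
        push_cast at hbd ⊢
        linarith

end Hypercube

theorem stmt7 (n m : ℕ) (h1 : n + 2 ≤ m) (h2 : m ≤ 2 * n - 1) :
    2 * (bv n m : ℤ) = -(m : ℤ)^2 + (4 * n - 3) * m - 2 * n^2 + 4 := by
  obtain ⟨-, -, H, -, hcard, hbd⟩ :=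
    Hypercube.exists_isBallExtension (n := n) (m := m) (by omega) (by omega) (by omega)
  have hleast : IsLeast {k | ∃ H : Finset (Fin n → Bool), H.card = m ∧ (vBoundary n H).card = k}
      (vBoundary n H).card := by
    refine ⟨⟨H, hcard, rfl⟩, ?_⟩
    rintro _ ⟨H', rfl, rfl⟩
    have := Hypercube.bvBound_le_two_mul_card_vBoundary H' (by omega) (by omega)
    rw [Hypercube.bvBound_of_ge (by omega)] at this
    linarith
  rw [bv, hleast.csInf_eq, hbd]
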